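/- For all positive integers m and n, the zero forcing number of the Hopi rectangle graph HD(m,n) equals m + n, i.e., Z(HD(m,n)) = m + n. -/

import Mathlib

/-- One round of the zero forcing color change rule, where vertices in the
leak set `L` are not permitted to force. A blue vertex `u ∉ L` with exactly one
non-blue neighbor `v` turns `v` blue. -/
def zfStep {V : Type*} (G : SimpleGraph V) (L : Set V) (B : Set V) : Set V :=
  B ∪ {v | ∃ u ∈ B, u ∉ L ∧ G.Adj u v ∧ ∀ w, G.Adj u w → w ∉ B → w = v}

/-- The set of vertices eventually colored blue starting from `B`, with leaks `L`. -/
def zfClosure {V : Type*} (G : SimpleGraph V) (L : Set V) (B : Set V) : Set V :=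
  ⋃ k, (zfStep G L)^[k] B

/-- `B` is an `ℓ`-leaky forcing set: for every leak set of size at most `ℓ`,
starting with exactly `B` blue, eventually every vertex becomes blue. -/
def IsLeakyForcingSet {V : Type*} (G : SimpleGraph V) (ℓ : ℕ) (B : Set V) : Prop :=
  ∀ L : Set V, L.ncard ≤ ℓ → zfClosure G L B = Set.univ

/-- `B` is a zero forcing set (no leaks). -/
def IsZeroForcingSet {V : Type*} (G : SimpleGraph V) (B : Set V) : Prop :=
  zfClosure G (∅ : Set V) B = Set.univ

/-- The zero forcing number `Z(G)`: minimum cardinality of a zero forcing set. -/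
noncomputable def zfNumber {V : Type*} (G : SimpleGraph V) : ℕ :=
  sInf (Set.ncard '' {B : Set V | IsZeroForcingSet G B})

/-- The `ℓ`-leaky forcing number `Z_(ℓ)(G)`: minimum cardinality of an
`ℓ`-leaky forcing set. -/
noncomputable def leakyNumber {V : Type*} (G : SimpleGraph V) (ℓ : ℕ) : ℕ :=
  sInf (Set.ncard '' {B : Set V | IsLeakyForcingSet G ℓ B})

/-- The vertex set of the Hopi rectangle graph of order `(m,n)`: the set of
integer lattice points `(i,j)` with `m-1 ≤ i+j ≤ 2n+m-1` and `|i-j| ≤ m`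
(realized as a `Finset` by filtering a sufficiently large box). -/
noncomputable def HDverts (m n : ℕ) : Finset (ℤ × ℤ) :=
  (Finset.Icc (-2 : ℤ) (2*n + 2*m) ×ˢ Finset.Icc (-2 : ℤ) (2*n + 2*m)).filter
    (fun p => (m : ℤ) - 1 ≤ p.1 + p.2 ∧ p.1 + p.2 ≤ 2*n + m - 1 ∧ |p.1 - p.2| ≤ m)

/-- The Hopi rectangle graph `HD(m,n)`: vertices are the points of `HDverts m n`,
and `(i,j)` is adjacent to `(i',j')` iff `|i - i'| + |j - j'| = 1`. -/
def HD (m n : ℕ) : SimpleGraph {p : ℤ × ℤ // p ∈ HDverts m n} where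
  Adj u v := |u.val.1 - v.val.1| + |u.val.2 - v.val.2| = 1
  symm := by
    constructor
    intro u v h
    rw [abs_sub_comm v.val.1 u.val.1, abs_sub_comm v.val.2 u.val.2]
    exact h
  loopless := by constructor; intro u h; simp at h

/-!
A fort is a set `F` such that no vertex outside `F` has exactly one neighbour in `F`; a nonempty
fort can never receive its first blue vertex, so it meets every zero forcing set. `HD(m,n)` has
`m + n` pairwise disjoint nonempty forts: the diagonals `i - j = 2k - m + 1` (`k < m`) and the
anti-diagonals `i + j = m + 2k` (`k < n`). Conversely, the two sides `i + j = m - 1` and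
`i - j = -m` hold `m + n` vertices and force the whole graph column by column in `i`, each vertex
being forced by its left neighbour.
-/

section ZeroForcing

open Function

variable {V : Type*} (G : SimpleGraph V)

def IsFort (F : Set V) : Prop :=
  ∀ u ∉ F, ∀ v ∈ F, G.Adj u v → ∃ w ∈ F, w ≠ v ∧ G.Adj u w

variable {G}

lemma zfStep_iterate_disjoint_of_isFort {F B : Set V} (hF : IsFort G F)
    (hBF : Disjoint B F) (k : ℕ) : Disjoint ((zfStep G ∅)^[k] B) F := by
  induction k with
  | zero => exact hBF
  | succ k ih =>
    rw [Function.iterate_succ_apply']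
    refine Set.disjoint_union_left.2 ⟨ih, Set.disjoint_left.2 ?_⟩
    rintro v ⟨u, hu, -, huv, hforce⟩ hvF
    obtain ⟨w, hwF, hwv, huw⟩ := hF u (Set.disjoint_left.1 ih hu) v hvF huv
    exact hwv (hforce w huw (Set.disjoint_right.1 ih hwF))

theorem IsFort.inter_nonempty {F B : Set V} (hF : IsFort G F) (hne : F.Nonempty)
    (hB : IsZeroForcingSet G B) : (B ∩ F).Nonempty := by
  rw [← Set.not_disjoint_iff_nonempty_inter]
  intro hBF
  obtain ⟨x, hx⟩ := hne
  have hxB : x ∈ zfClosure G ∅ B := hB ▸ Set.mem_univ x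
  obtain ⟨k, hxk⟩ := Set.mem_iUnion.1 hxB
  exact Set.disjoint_left.1 (zfStep_iterate_disjoint_of_isFort hF hBF k) hxk hx

theorem card_le_ncard_of_isFort {ι : Type*} [Finite V] {F : ι → Set V}
    (hF : ∀ i, IsFort G (F i)) (hne : ∀ i, (F i).Nonempty) (hdisj : Pairwise (Disjoint on F))
    {B : Set V} (hB : IsZeroForcingSet G B) : Nat.card ι ≤ B.ncard := by
  choose f hf using fun i => (hF i).inter_nonempty (hne i) hB
  have hinj : Function.Injective f := fun i j hij => by
    by_contra hne
    exact Set.disjoint_left.1 (hdisj hne) (hf i).2 (hij ▸ (hf j).2)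
  rw [← Set.ncard_range_of_injective hinj]
  exact Set.ncard_le_ncard (Set.range_subset_iff.2 fun i => (hf i).1)

lemma mem_zfStep_of_forall_adj {L B : Set V} {u v : V} (hu : u ∈ B) (huL : u ∉ L)
    (huv : G.Adj u v) (hrest : ∀ w, G.Adj u w → w ≠ v → w ∈ B) : v ∈ zfStep G L B :=
  Or.inr ⟨u, hu, huL, huv, fun w huw hwB => not_not.1 fun hwv => hwB (hrest w huw hwv)⟩

lemma monotone_zfStep_iterate (L B : Set V) : Monotone fun k => (zfStep G L)^[k] B :=
  monotone_nat_of_le_succ fun k => by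
    rw [Function.iterate_succ_apply']
    exact Set.subset_union_left

theorem zfNumber_eq_of_isZeroForcingSet {k : ℕ} {B : Set V} (hB : IsZeroForcingSet G B)
    (hBk : B.ncard ≤ k) (hlow : ∀ B, IsZeroForcingSet G B → k ≤ B.ncard) :
    zfNumber G = k := by
  have hmem : B.ncard ∈ Set.ncard '' {B | IsZeroForcingSet G B} := ⟨B, hB, rfl⟩
  refine le_antisymm ((Nat.sInf_le hmem).trans hBk) (le_csInf ⟨_, hmem⟩ ?_)
  rintro _ ⟨B', hB', rfl⟩
  exact hlow B' hB'

end ZeroForcing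

section HopiRectangle

open Function

variable {m n : ℕ}

lemma mem_HDverts {p : ℤ × ℤ} :
    p ∈ HDverts m n ↔ (m : ℤ) - 1 ≤ p.1 + p.2 ∧ p.1 + p.2 ≤ 2 * n + m - 1 ∧
      -(m : ℤ) ≤ p.1 - p.2 ∧ p.1 - p.2 ≤ m := by
  simp only [HDverts, Finset.mem_filter, Finset.mem_product, Finset.mem_Icc, abs_le]
  omega

lemma HD_adj_iff {u v : {p : ℤ × ℤ // p ∈ HDverts m n}} :
    (HD m n).Adj u v ↔
      (v.val.1 = u.val.1 + 1 ∧ v.val.2 = u.val.2) ∨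
      (v.val.1 = u.val.1 - 1 ∧ v.val.2 = u.val.2) ∨
      (v.val.1 = u.val.1 ∧ v.val.2 = u.val.2 + 1) ∨
      (v.val.1 = u.val.1 ∧ v.val.2 = u.val.2 - 1) := by
  change |u.val.1 - v.val.1| + |u.val.2 - v.val.2| = 1 ↔ _
  rcases abs_cases (u.val.1 - v.val.1) with ⟨h1, h1'⟩ | ⟨h1, h1'⟩ <;>
    rcases abs_cases (u.val.2 - v.val.2) with ⟨h2, h2'⟩ | ⟨h2, h2'⟩ <;> omega

def HDfort : Fin m ⊕ Fin n → Set {p : ℤ × ℤ // p ∈ HDverts m n}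
  | .inl k => {v | v.val.1 - v.val.2 = 2 * k - m + 1}
  | .inr k => {v | v.val.1 + v.val.2 = m + 2 * k}

lemma isFort_HDfort (k : Fin m ⊕ Fin n) : IsFort (HD m n) (HDfort k) := by
  rintro ⟨⟨x, y⟩, hu⟩ hxy ⟨⟨a, b⟩, hv⟩ hab hadj
  rw [HD_adj_iff] at hadj
  rw [mem_HDverts] at hu hv
  rcases k with k | k <;> have hk := k.isLt <;>
    simp only [HDfort, Set.mem_ofPred_eq] at hxy hab hadj ⊢
  -- in both cases `w` is the reflection of `v` in the line through `u` perpendicular to the fort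
  · refine ⟨⟨(x + y - b, x + y - a), mem_HDverts.2 ?_⟩, ?_, ?_, ?_⟩ <;>
      simp only [ne_eq, Subtype.ext_iff, Prod.ext_iff, HD_adj_iff] <;> omega
  · refine ⟨⟨(x - y + b, y - x + a), mem_HDverts.2 ?_⟩, ?_, ?_, ?_⟩ <;>
      simp only [ne_eq, Subtype.ext_iff, Prod.ext_iff, HD_adj_iff] <;> omega

lemma HDfort_nonempty (k : Fin m ⊕ Fin n) : (HDfort k).Nonempty := by
  rcases k with k | k
  · exact ⟨⟨(k, m - 1 - k), mem_HDverts.2 (by omega)⟩, show _ = _ by dsimp only; omega⟩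
  · exact ⟨⟨(k, k + m), mem_HDverts.2 (by omega)⟩, show _ = _ by dsimp only; omega⟩

-- `i - j` and `i + j` have the same parity, which keeps a diagonal and an anti-diagonal apart.
lemma pairwise_disjoint_HDfort : Pairwise (Disjoint on (HDfort : Fin m ⊕ Fin n → Set _)) := by
  rintro (i | i) (j | j) hij <;>
    refine Set.disjoint_left.2 fun v hi hj => hij ?_ <;>
    simp only [HDfort, Set.mem_ofPred_eq] at hi hj <;> grind

theorem add_le_ncard_of_isZeroForcingSet_HD {B : Set {p : ℤ × ℤ // p ∈ HDverts m n}}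
    (hB : IsZeroForcingSet (HD m n) B) : m + n ≤ B.ncard := by
  simpa using card_le_ncard_of_isFort isFort_HDfort HDfort_nonempty pairwise_disjoint_HDfort hB

variable (m n) in
def HDbase : Set {p : ℤ × ℤ // p ∈ HDverts m n} :=
  {v | v.val.1 + v.val.2 = m - 1 ∨ v.val.1 - v.val.2 = -m}

lemma ncard_HDbase_le : (HDbase m n).ncard ≤ m + n := by
  let f : {p : ℤ × ℤ // p ∈ HDverts m n} → ℤ := fun v =>
    if v.val.1 + v.val.2 = m - 1 then v.val.1 else v.val.1 + m
  calc (HDbase m n).ncard ≤ (Finset.Ico (0 : ℤ) (m + n) : Set ℤ).ncard := by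
        refine Set.ncard_le_ncard_of_injOn f ?_ ?_
        · rintro ⟨⟨x, y⟩, hv⟩ hB
          have := mem_HDverts.1 hv
          simp only [HDbase, Set.mem_ofPred_eq] at hB
          simp only [f, Finset.coe_Ico, Set.mem_Ico]
          split_ifs <;> omega
        · rintro ⟨⟨x, y⟩, hv⟩ hB ⟨⟨x', y'⟩, hv'⟩ hB' hf
          have := mem_HDverts.1 hv
          have := mem_HDverts.1 hv'
          simp only [HDbase, Set.mem_ofPred_eq] at hB hB'
          simp only [f, Subtype.ext_iff, Prod.ext_iff] at hf ⊢
          split_ifs at hf <;> omega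
    _ = m + n := by rw [Set.ncard_coe_finset, Int.card_Ico]; omega

lemma fst_mem_Ico_of_mem_HDverts {p : ℤ × ℤ} (hp : p ∈ HDverts m n) :
    0 ≤ p.1 ∧ p.1 < m + n := by
  have := mem_HDverts.1 hp
  omega

lemma fst_lt_subset_zfStep_iterate_HDbase (k : ℕ) :
    {v : {p : ℤ × ℤ // p ∈ HDverts m n} | v.val.1 < k} ⊆
      (zfStep (HD m n) ∅)^[k] (HDbase m n) := by
  induction k with
  | zero =>
    rintro ⟨p, hp⟩ hv
    simp only [Set.mem_ofPred_eq] at hv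
    exact absurd (fst_mem_Ico_of_mem_HDverts hp).1 (not_le.2 hv)
  | succ k ih =>
    rintro ⟨⟨x, y⟩, hv⟩ hxk
    simp only [Set.mem_ofPred_eq] at hxk
    by_cases hlt : x < k
    · exact monotone_zfStep_iterate _ _ (Nat.le_succ k) (ih hlt)
    by_cases hB : ⟨(x, y), hv⟩ ∈ HDbase m n
    · exact monotone_zfStep_iterate _ _ (Nat.zero_le _) hB
    simp only [HDbase, Set.mem_ofPred_eq, not_or] at hB
    have := mem_HDverts.1 hv
    rw [Function.iterate_succ_apply']
    -- the left neighbour forces it: its other neighbours lie in earlier columns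
    refine mem_zfStep_of_forall_adj (u := ⟨(x - 1, y), mem_HDverts.2 (by omega)⟩) (ih ?_)
      (Set.notMem_empty _) (HD_adj_iff.2 (Or.inl ⟨(sub_add_cancel x 1).symm, rfl⟩))
      fun w hw hwv => ih ?_
    · show x - 1 < k
      omega
    · rw [HD_adj_iff] at hw
      simp only [ne_eq, Subtype.ext_iff, Prod.ext_iff] at hw hwv
      show w.val.1 < k
      omega

lemma isZeroForcingSet_HDbase : IsZeroForcingSet (HD m n) (HDbase m n) :=
  Set.eq_univ_of_forall fun v => Set.mem_iUnion.2
    ⟨m + n, fst_lt_subset_zfStep_iterate_HDbase _ (by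
      simpa using (fst_mem_Ico_of_mem_HDverts v.property).2)⟩

end HopiRectangle

theorem zfNumber_HD_general (m n : ℕ) : zfNumber (HD m n) = m + n :=
  zfNumber_eq_of_isZeroForcingSet isZeroForcingSet_HDbase ncard_HDbase_le
    fun _ => add_le_ncard_of_isZeroForcingSet_HD

/-- The zero forcing number of `HD(m,n)` is `m + n`. -/
theorem zfNumber_HD (m n : ℕ) (hm : 0 < m) (hn : 0 < n) :
    zfNumber (HD m n) = m + n :=
  zfNumber_HD_general m n
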